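/- arXiv:1907.10871 — 2 statements merged into one kernel-verified Lean document; each statement's English description precedes it below -/
import Mathlib

section
/- Let n ≥ 1 and let a_0, ..., a_n be nonnegative real numbers with a_n > 0 and such that a_r > 0 implies a_s > 0 for all r ≤ s ≤ n. Define b_k = ∑_{i=0}^{n-k} C(n-k, i) · a_{k+i}. Then the sequence (b_0, ..., b_n) is strictly decreasing in differences only degenerately: for every 0 ≤ i < j < k ≤ n, (k-j)·b_i + (i-k)·b_j + (j-i)·b_k ≥ 0. -/
theorem reverse_ineq_for_steiner_sums (n : ℕ) (hn : 1 ≤ n) (a : ℕ → ℝ)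
    (ha : ∀ i : ℕ, i ≤ n → 0 ≤ a i) (han : 0 < a n)
    (hsupp : ∀ r s : ℕ, 0 < a r → r ≤ s → s ≤ n → 0 < a s)
    (b : ℕ → ℝ)
    (hb : ∀ k : ℕ, k ≤ n →
      b k = ∑ i ∈ Finset.range (n - k + 1), (Nat.choose (n - k) i : ℝ) * a (k + i)) :
    ∀ i j k : ℕ, i < j → j < k → k ≤ n →
      ((k : ℝ) - j) * b i + ((i : ℝ) - k) * b j + ((j : ℝ) - i) * b k ≥ 0 := by
  set S : ℕ → ℕ → ℝ := fun m k => ∑ i ∈ Finset.range (m + 1), (Nat.choose m i : ℝ) * a (k + i) with hS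
  have hS_nonneg : ∀ m k : ℕ, k + m ≤ n → 0 ≤ S m k := by
    intro m k h
    apply Finset.sum_nonneg
    intro i hi
    rw [Finset.mem_range] at hi
    exact mul_nonneg (Nat.cast_nonneg _) (ha _ (by omega))
  have hPascal : ∀ m k : ℕ, S (m + 1) k = S m k + S m (k + 1) := by
    intro m k
    have e1 : S (m + 1) k =
        (∑ i ∈ Finset.range (m + 1), (((m + 1).choose (i + 1) : ℝ)) * a (k + (i + 1)))
          + (((m + 1).choose 0 : ℝ)) * a (k + 0) :=
      Finset.sum_range_succ' _ _
    have e2 : (∑ i ∈ Finset.range (m + 2), ((m.choose i : ℝ)) * a (k + i)) =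
        (∑ i ∈ Finset.range (m + 1), ((m.choose (i + 1) : ℝ)) * a (k + (i + 1)))
          + ((m.choose 0 : ℝ)) * a (k + 0) :=
      Finset.sum_range_succ' _ _
    have e3 : (∑ i ∈ Finset.range (m + 2), ((m.choose i : ℝ)) * a (k + i)) = S m k := by
      rw [Finset.sum_range_succ]
      simp [Nat.choose_succ_self]
      rfl
    have e4 : ∀ i : ℕ, (((m + 1).choose (i + 1) : ℝ)) * a (k + (i + 1)) =
        ((m.choose i : ℝ)) * a (k + 1 + i) + ((m.choose (i + 1) : ℝ)) * a (k + (i + 1)) := by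
      intro i
      have : (m + 1).choose (i + 1) = m.choose i + m.choose (i + 1) := Nat.choose_succ_succ m i
      have harg : k + (i + 1) = k + 1 + i := by omega
      rw [this, harg]
      push_cast
      ring
    rw [e1]
    simp only [e4]
    rw [Finset.sum_add_distrib]
    have : S m (k + 1) = ∑ i ∈ Finset.range (m + 1), ((m.choose i : ℝ)) * a (k + 1 + i) := rfl
    rw [this]
    rw [← e3, e2]
    simp only [Nat.choose_zero_right, Nat.cast_one]
    ring
  have hbS : ∀ k : ℕ, k ≤ n → b k = S (n - k) k := fun k hk => hb k hk
  -- d t := S (n-1-t) t is the difference b t - b (t+1), for t < n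
  have hstep : ∀ t : ℕ, t < n → b t = b (t + 1) + S (n - 1 - t) t := by
    intro t ht
    have h1 : n - t = (n - 1 - t) + 1 := by omega
    have h2 : n - (t + 1) = n - 1 - t := by omega
    rw [hbS t (by omega), hbS (t + 1) (by omega), h1, hPascal, h2]
    ring
  set d : ℕ → ℝ := fun t => S (n - 1 - t) t with hd
  have hd_nonneg : ∀ t : ℕ, t < n → 0 ≤ d t := by
    intro t ht
    exact hS_nonneg _ _ (by omega)
  have hd_step : ∀ t : ℕ, t + 1 ≤ n - 1 → d (t + 1) ≤ d t := by
    intro t ht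
    have h1 : n - 1 - t = (n - 2 - t) + 1 := by omega
    have h2 : n - 1 - (t + 1) = n - 2 - t := by omega
    have : d t = S (n - 2 - t) t + d (t + 1) := by
      simp only [hd, h1, h2, hPascal]
    rw [this]
    have := hS_nonneg (n - 2 - t) t (by omega)
    linarith
  have hd_anti : ∀ s t : ℕ, s ≤ t → t ≤ n - 1 → d t ≤ d s := by
    intro s t hst
    induction t, hst using Nat.le_induction with
    | base => intro _; exact le_refl _
    | succ t ht ih =>
      intro h
      exact le_trans (hd_step t h) (ih (by omega))
  have htel : ∀ i j : ℕ, i ≤ j → j ≤ n → b i = b j + ∑ t ∈ Finset.Ico i j, d t := by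
    intro i j hij
    induction j, hij using Nat.le_induction with
    | base => intro _; simp
    | succ j hj ih =>
      intro h
      rw [Finset.sum_Ico_succ_top hj]
      have := hstep j (by omega)
      rw [ih (by omega)] at *
      linarith [hstep j (by omega)]
  intro i j k hij hjk hkn
  have hc : b i - b j = ∑ t ∈ Finset.Ico i j, d t := by
    have := htel i j (by omega) (by omega); linarith
  have hc2 : b j - b k = ∑ t ∈ Finset.Ico j k, d t := by
    have := htel j k (by omega) (by omega); linarith
  have hlow : ((j : ℝ) - i) * d (j - 1) ≤ b i - b j := by
    rw [hc]
    have hcard : (Finset.Ico i j).card = j - i := Nat.card_Ico i j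
    have := Finset.card_nsmul_le_sum (Finset.Ico i j) d (d (j - 1)) ?_
    · rw [hcard, nsmul_eq_mul] at this
      have hcast : ((j - i : ℕ) : ℝ) = (j : ℝ) - i := by
        push_cast [Nat.cast_sub (le_of_lt hij)]; ring
      rw [hcast] at this
      exact this
    · intro t htmem
      rw [Finset.mem_Ico] at htmem
      exact hd_anti t (j - 1) (by omega) (by omega)
  have hhigh : b j - b k ≤ ((k : ℝ) - j) * d (j - 1) := by
    rw [hc2]
    have hcard : (Finset.Ico j k).card = k - j := Nat.card_Ico j k
    have := Finset.sum_le_card_nsmul (Finset.Ico j k) d (d (j - 1)) ?_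
    · rw [hcard, nsmul_eq_mul] at this
      have hcast : ((k - j : ℕ) : ℝ) = (k : ℝ) - j := by
        push_cast [Nat.cast_sub (le_of_lt hjk)]; ring
      rw [hcast] at this
      exact this
    · intro t htmem
      rw [Finset.mem_Ico] at htmem
      exact hd_anti (j - 1) t (by omega) (by omega)
  have hkj : (0 : ℝ) ≤ (k : ℝ) - j := by
    have : (j : ℝ) ≤ k := by exact_mod_cast le_of_lt hjk
    linarith
  have hji : (0 : ℝ) ≤ (j : ℝ) - i := by
    have : (i : ℝ) ≤ j := by exact_mod_cast le_of_lt hij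
    linarith
  nlinarith [mul_le_mul_of_nonneg_left hlow hkj, mul_le_mul_of_nonneg_left hhigh hji]
end

section
/- Let n ≥ 1, let a_0, ..., a_n be nonnegative real numbers, define b_r = ∑_{s=0}^{n-r} C(n-r, s)·a_{r+s} for 0 ≤ r ≤ n, and f(i, l) = ∑_{k=0}^{n-l} C(n-l, k)·(-1)^k·b_{i+k} for 0 ≤ i ≤ l ≤ n. Then for every 0 ≤ i < j < k ≤ l ≤ n, (k-j)·f(i, l) + (i-k)·f(j, l) + (j-i)·f(k, l) ≥ 0. -/
/-!
With `binomSum a i m = ∑ₛ C(m, s) a_{i+s}` one has `b_r = binomSum a r (n - r)`, and the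
alternating sum defining `f` undoes the extra binomial factors: `f i l = binomSum a i (l - i)`.
By Pascal's rule the second difference of `t ↦ f t l` is then `binomSum a t (l - t - 2) ≥ 0`, so
`t ↦ f t l` is a convex sequence on `[0, l]` and the inequality is its three-point convexity
inequality.
-/

open Finset

section ConvexSequence

variable {R : Type*} [CommRing R] [LinearOrder R] [IsStrictOrderedRing R]

theorem three_point_ineq_of_second_diff_nonneg (h : ℕ → R) {i j k : ℕ} (hij : i < j)
    (hjk : j < k) (hconv : ∀ t, i ≤ t → t + 2 ≤ k → 0 ≤ h t - 2 * h (t + 1) + h (t + 2)) :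
    0 ≤ ((k : R) - j) * h i + ((i : R) - k) * h j + ((j : R) - i) * h k := by
  set D : ℕ → R := fun t ↦ h t - h (t + 1) with hD
  have hanti : AntitoneOn D (Set.Ico i k) := by
    refine antitoneOn_of_succ_le Set.ordConnected_Ico fun t _ ht ht' ↦ ?_
    rw [Order.succ_eq_add_one] at ht' ⊢
    have := hconv t ht.1 (Set.mem_Ico.1 ht').2
    simp only [hD]
    linarith
  have htele : ∀ m n, m ≤ n → h m - h n = ∑ t ∈ Ico m n, D t := fun m n hmn ↦ by
    simpa [hD, neg_add_eq_sub] using (sum_Ico_sub (fun t ↦ -h t) hmn).symm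
  have hleft : ((j : R) - i) * D j ≤ h i - h j := by
    have := card_nsmul_le_sum (Ico i j) D (D j) fun t ht ↦ by
      rw [mem_Ico] at ht
      exact hanti ⟨ht.1, by omega⟩ ⟨hij.le, hjk⟩ ht.2.le
    rwa [Nat.card_Ico, nsmul_eq_mul, Nat.cast_sub hij.le, ← htele i j hij.le] at this
  have hright : h j - h k ≤ ((k : R) - j) * D j := by
    have := sum_le_card_nsmul (Ico j k) D (D j) fun t ht ↦ by
      rw [mem_Ico] at ht
      exact hanti ⟨hij.le, hjk⟩ ⟨by omega, ht.2⟩ ht.1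
    rwa [Nat.card_Ico, nsmul_eq_mul, Nat.cast_sub hjk.le, ← htele j k hjk.le] at this
  have hji : (0 : R) ≤ j - i := sub_nonneg.2 (Nat.cast_le.2 hij.le)
  have hkj : (0 : R) ≤ k - j := sub_nonneg.2 (Nat.cast_le.2 hjk.le)
  linear_combination mul_le_mul_of_nonneg_left hleft hkj + mul_le_mul_of_nonneg_left hright hji

end ConvexSequence

section BinomSum

variable {R : Type*}

def binomSum [Semiring R] (a : ℕ → R) (i m : ℕ) : R :=
  ∑ s ∈ range (m + 1), (m.choose s : R) * a (i + s)

theorem binomSum_succ [Semiring R] (a : ℕ → R) (i m : ℕ) :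
    binomSum a i (m + 1) = binomSum a i m + binomSum a (i + 1) m := by
  rw [binomSum, binomSum, binomSum, sum_choose_succ_mul (fun s _ ↦ a (i + s)) m]
  simp only [add_assoc, add_comm 1]

theorem binomSum_second_diff [Ring R] (a : ℕ → R) (i m : ℕ) :
    binomSum a i (m + 2) - 2 * binomSum a (i + 1) (m + 1) + binomSum a (i + 2) m =
      binomSum a i m := by
  rw [binomSum_succ a i (m + 1), binomSum_succ a i m, binomSum_succ a (i + 1) m, two_mul]
  abel

theorem binomSum_nonneg [Semiring R] [PartialOrder R] [IsOrderedRing R] {a : ℕ → R} {i m : ℕ}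
    (ha : ∀ s ≤ m, 0 ≤ a (i + s)) : 0 ≤ binomSum a i m :=
  sum_nonneg fun s hs ↦ mul_nonneg (Nat.cast_nonneg _) (ha s (by simpa [Nat.lt_succ_iff] using hs))

theorem sum_choose_mul_neg_one_pow_binomSum [CommRing R] (a : ℕ → R) (d i m : ℕ) :
    ∑ k ∈ range (d + 1), (d.choose k : R) * (-1) ^ k * binomSum a (i + k) (m + (d - k)) =
      binomSum a i m := by
  induction d generalizing i m with
  | zero => simp
  | succ d ih =>
    have hpascal := sum_choose_succ_mul (fun k r ↦ (-1) ^ k * binomSum a (i + k) (m + r)) d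
    simp only [← mul_assoc] at hpascal
    have hshift : ∑ k ∈ range (d + 1),
        (d.choose k : R) * (-1) ^ k * binomSum a (i + k) (m + (d + 1 - k))
        = binomSum a i (m + 1) := by
      rw [← ih i (m + 1)]
      refine sum_congr rfl fun k hk ↦ ?_
      rw [mem_range] at hk
      rw [show m + (d + 1 - k) = m + 1 + (d - k) by omega]
    have hsign : ∑ k ∈ range (d + 1),
        (d.choose k : R) * (-1) ^ (k + 1) * binomSum a (i + (k + 1)) (m + (d - k))
        = -binomSum a (i + 1) m := by
      rw [← ih (i + 1) m, ← sum_neg_distrib]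
      refine sum_congr rfl fun k _ ↦ ?_
      rw [pow_succ, add_comm k 1, ← add_assoc]
      ring
    rw [hpascal, hshift, hsign, binomSum_succ]
    abel

end BinomSum

theorem formal_derivative_reverse_ineq_general (n : ℕ) (a : ℕ → ℝ)
    (ha : ∀ i : ℕ, i ≤ n → 0 ≤ a i)
    (b : ℕ → ℝ)
    (hb : ∀ r : ℕ, r ≤ n →
      b r = ∑ s ∈ Finset.range (n - r + 1), (Nat.choose (n - r) s : ℝ) * a (r + s))
    (f : ℕ → ℕ → ℝ)
    (hf : ∀ i l : ℕ, i ≤ l → l ≤ n →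
      f i l = ∑ k ∈ Finset.range (n - l + 1),
        (Nat.choose (n - l) k : ℝ) * (-1 : ℝ) ^ k * b (i + k)) :
    ∀ i j k l : ℕ, i < j → j < k → k ≤ l → l ≤ n →
      ((k : ℝ) - j) * f i l + ((i : ℝ) - k) * f j l + ((j : ℝ) - i) * f k l ≥ 0 := by
  intro i j k l hij hjk hkl hln
  have hf_eq : ∀ t ≤ l, f t l = binomSum a t (l - t) := fun t htl ↦ by
    rw [hf t l htl hln, ← sum_choose_mul_neg_one_pow_binomSum a (n - l) t (l - t)]
    refine sum_congr rfl fun s hs ↦ ?_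
    rw [mem_range] at hs
    rw [hb (t + s) (by omega), show n - (t + s) = l - t + (n - l - s) by omega]
    rfl
  rw [hf_eq i (by omega), hf_eq j (by omega), hf_eq k hkl]
  refine three_point_ineq_of_second_diff_nonneg (fun t ↦ binomSum a t (l - t)) hij hjk
    fun t _ htk ↦ ?_
  obtain ⟨m, rfl⟩ : ∃ m, l = t + 2 + m := ⟨l - t - 2, by omega⟩
  rw [show t + 2 + m - t = m + 2 by omega, show t + 2 + m - (t + 1) = m + 1 by omega,
    show t + 2 + m - (t + 2) = m by omega, binomSum_second_diff]
  exact binomSum_nonneg fun s hs ↦ ha _ (by omega)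

theorem formal_derivative_reverse_ineq (n : ℕ) (hn : 1 ≤ n) (a : ℕ → ℝ)
    (ha : ∀ i : ℕ, i ≤ n → 0 ≤ a i)
    (b : ℕ → ℝ)
    (hb : ∀ r : ℕ, r ≤ n →
      b r = ∑ s ∈ Finset.range (n - r + 1), (Nat.choose (n - r) s : ℝ) * a (r + s))
    (f : ℕ → ℕ → ℝ)
    (hf : ∀ i l : ℕ, i ≤ l → l ≤ n →
      f i l = ∑ k ∈ Finset.range (n - l + 1),
        (Nat.choose (n - l) k : ℝ) * (-1 : ℝ) ^ k * b (i + k)) :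
    ∀ i j k l : ℕ, i < j → j < k → k ≤ l → l ≤ n →
      ((k : ℝ) - j) * f i l + ((i : ℝ) - k) * f j l + ((j : ℝ) - i) * f k l ≥ 0 :=
  formal_derivative_reverse_ineq_general n a ha b hb f hf
end
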